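/- arXiv:1104.2835 — 6 statements merged into one kernel-verified Lean document; each statement's English description precedes it below -/
import Mathlib

section
/- Let S ⊆ G be a finitely generated commutative cancellative reduced monoid with generators a₁,...,a_r, b₁,...,b_t in an abelian group G. Let S₁ be the submonoid generated by the aᵢ and S₂ the submonoid generated by the bⱼ, with associated subgroups G(S₁), G(S₂) of G. If there exists d ∈ (S₁ ∩ S₂) \ {0} with G(S₁) ∩ G(S₂) = dℤ, then for every relation ∑ αᵢaᵢ + ∑ βⱼbⱼ = ∑ γᵢaᵢ + ∑ δⱼbⱼ (with α,γ ∈ ℕ^r, β,δ ∈ ℕ^t), there exists λ ∈ ℤ such that ∑ αᵢaᵢ = ∑ γᵢaᵢ + λd and ∑ δⱼbⱼ = ∑ βⱼbⱼ + λd. -/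
/-- If `S₁ = ⟨a⟩`, `S₂ = ⟨b⟩` are submonoids of an abelian group `G` and there is
`d ∈ (S₁ ∩ S₂) \ {0}` with `G(S₁) ⊓ G(S₂) = dℤ`, then every relation
`∑ αᵢaᵢ + ∑ βⱼbⱼ = ∑ γᵢaᵢ + ∑ δⱼbⱼ` splits: there is `λ ∈ ℤ` with
`∑ αᵢaᵢ = ∑ γᵢaᵢ + λd` and `∑ δⱼbⱼ = ∑ βⱼbⱼ + λd`. -/
theorem stmt1 {G : Type*} [AddCommGroup G] [AddGroup.FG G] {r t : ℕ}
    (a : Fin r → G) (b : Fin t → G) (d : G) (hd0 : d ≠ 0)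
    (hd1 : d ∈ AddSubmonoid.closure (Set.range a))
    (hd2 : d ∈ AddSubmonoid.closure (Set.range b))
    (hG : AddSubgroup.closure (Set.range a) ⊓ AddSubgroup.closure (Set.range b) =
      AddSubgroup.zmultiples d)
    (α γ : Fin r → ℕ) (β δ : Fin t → ℕ)
    (h : ∑ i, α i • a i + ∑ j, β j • b j = ∑ i, γ i • a i + ∑ j, δ j • b j) :
    ∃ lam : ℤ, (∑ i, α i • a i = ∑ i, γ i • a i + lam • d) ∧
      (∑ j, δ j • b j = ∑ j, β j • b j + lam • d) := by
  set x : G := ∑ i, α i • a i - ∑ i, γ i • a i with hx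
  have hmem : ∀ (c : Fin r → ℕ), ∑ i, c i • a i ∈ AddSubgroup.closure (Set.range a) := by
    intro c
    exact AddSubgroup.sum_mem _ fun i _ =>
      AddSubgroup.nsmul_mem _ (AddSubgroup.subset_closure (Set.mem_range_self i)) _
  have hmemb : ∀ (c : Fin t → ℕ), ∑ j, c j • b j ∈ AddSubgroup.closure (Set.range b) := by
    intro c
    exact AddSubgroup.sum_mem _ fun j _ =>
      AddSubgroup.nsmul_mem _ (AddSubgroup.subset_closure (Set.mem_range_self j)) _
  have hx2 : x = ∑ j, δ j • b j - ∑ j, β j • b j := by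
    rw [hx, sub_eq_sub_iff_add_eq_add, h, add_comm]
  have hxm : x ∈ AddSubgroup.zmultiples d := by
    rw [← hG, AddSubgroup.mem_inf]
    refine ⟨sub_mem (hmem α) (hmem γ), ?_⟩
    rw [hx2]; exact sub_mem (hmemb δ) (hmemb β)
  obtain ⟨lam, hlam⟩ := hxm
  have hld : lam • d = x := hlam
  refine ⟨lam, ?_, ?_⟩
  · rw [hld, hx]; abel
  · rw [hld, hx2]; abel
end

section
/- Let L₁ ⊆ ℤ^r × {0} and L₂ ⊆ {0} × ℤ^t be subgroups of ℤ^{r+t} (identified with ℤ^r × ℤ^t), and let (γ_X, -γ_Y) ∈ ℤ^{r+t} with γ_X ∈ ℕ^r, γ_Y ∈ ℕ^t. Let K = L₁ + L₂ + ℤ·(γ_X, -γ_Y). Let A₁: ℤ^r → G and A₂: ℤ^t → G be group homomorphisms into an abelian group G whose combined kernel is K (i.e., A₁(u) = A₂(v) iff (u,-v) ∈ K), with A₁(γ_X) = A₂(γ_Y) =: d. Then the intersection of the images A₁(ℤ^r) ∩ A₂(ℤ^t) equals dℤ. -/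
/-- If the combined kernel of `A₁ : ℤ^r → G`, `A₂ : ℤ^t → G` is the lattice
`K = L₁ + L₂ + ℤ·(γ_X, -γ_Y)` with `L₁ ⊆ ℤ^r × {0}`, `L₂ ⊆ {0} × ℤ^t`,
`γ_X ∈ ℕ^r`, `γ_Y ∈ ℕ^t` and `A₁(γ_X) = A₂(γ_Y) = d`, then
`A₁(ℤ^r) ∩ A₂(ℤ^t) = dℤ`. -/
theorem stmt2 {r t : ℕ} {G : Type*} [AddCommGroup G]
    (L₁ L₂ : AddSubgroup ((Fin r → ℤ) × (Fin t → ℤ)))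
    (hL₁ : ∀ x ∈ L₁, x.2 = 0) (hL₂ : ∀ x ∈ L₂, x.1 = 0)
    (γX : Fin r → ℤ) (γY : Fin t → ℤ)
    (hγX : 0 ≤ γX) (hγY : 0 ≤ γY)
    (K : AddSubgroup ((Fin r → ℤ) × (Fin t → ℤ)))
    (hK : K = L₁ ⊔ L₂ ⊔ AddSubgroup.zmultiples (γX, -γY))
    (A₁ : (Fin r → ℤ) →+ G) (A₂ : (Fin t → ℤ) →+ G)
    (hker : ∀ u v, A₁ u = A₂ v ↔ (u, -v) ∈ K)
    (d : G) (hd1 : A₁ γX = d) (hd2 : A₂ γY = d) :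
    A₁.range ⊓ A₂.range = AddSubgroup.zmultiples d := by
  ext g
  simp only [AddSubgroup.mem_inf, AddMonoidHom.mem_range, AddSubgroup.mem_zmultiples_iff]
  constructor
  · rintro ⟨⟨u, rfl⟩, ⟨v, hv⟩⟩
    have h := (hker u v).1 hv.symm
    rw [hK, AddSubgroup.mem_sup] at h
    obtain ⟨x, hx, c, hc, hxc⟩ := h
    rw [AddSubgroup.mem_sup] at hx
    obtain ⟨a, ha, b, hb, rfl⟩ := hx
    rw [AddSubgroup.mem_zmultiples_iff] at hc
    obtain ⟨n, rfl⟩ := hc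
    refine ⟨n, ?_⟩
    have hb1 : b.1 = 0 := hL₂ b hb
    have ha2 : a.2 = 0 := hL₁ a ha
    have hu : u = a.1 + n • γX := by
      have h1 := congrArg Prod.fst hxc
      simp [hb1] at h1
      exact h1.symm
    have hA : A₁ a.1 = 0 := by
      have hmem : ((a.1, -(0 : Fin t → ℤ)) : (Fin r → ℤ) × (Fin t → ℤ)) ∈ K := by
        rw [hK]
        have : ((a.1, -(0 : Fin t → ℤ)) : (Fin r → ℤ) × (Fin t → ℤ)) = a := by
          ext <;> simp [ha2]
        rw [this]
        exact AddSubgroup.mem_sup_left (AddSubgroup.mem_sup_left ha)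
      have := (hker a.1 0).2 hmem
      simpa using this
    rw [hu, map_add, map_zsmul, hd1, hA, zero_add]
  · rintro ⟨n, rfl⟩
    exact ⟨⟨n • γX, by rw [map_zsmul, hd1]⟩, ⟨n • γY, by rw [map_zsmul, hd2]⟩⟩
end

section
/- Let k be a field, S a commutative monoid, and deg: ℕ^{r+t} → S the monoid homomorphism given by deg(α,β) = ∑ αᵢaᵢ + ∑ βⱼbⱼ for fixed elements aᵢ, bⱼ of S. Suppose S is cancellative (embeds in a group G), and suppose G(S₁) ∩ G(S₂) = dℤ for some d = deg(γ_X, 0) = deg(0, γ_Y) with γ_X ∈ ℕ^r, γ_Y ∈ ℕ^t nonzero. Then the toric ideal I_S = ({X^u - X^v : deg(u) = deg(v)}) in k[X₁,...,X_r,Y₁,...,Y_t] satisfies I_S = I_{S₁} + I_{S₂} + (X^{γ_X} - Y^{γ_Y}), where I_{S₁} (resp. I_{S₂}) is the ideal generated by the binomials X^α - X^γ with ∑αᵢaᵢ = ∑γᵢaᵢ (resp. Y^β - Y^δ with ∑βⱼbⱼ = ∑δⱼbⱼ). -/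
open MvPolynomial

/-- The monomial `X^α` in the `X`-variables of `k[X₁,…,X_r,Y₁,…,Y_t]`. -/
noncomputable def Xmon (k : Type*) [Field k] (r t : ℕ) (α : Fin r → ℕ) :
    MvPolynomial (Fin r ⊕ Fin t) k :=
  ∏ i, (X (Sum.inl i)) ^ α i

/-- The monomial `Y^β` in the `Y`-variables of `k[X₁,…,X_r,Y₁,…,Y_t]`. -/
noncomputable def Ymon (k : Type*) [Field k] (r t : ℕ) (β : Fin t → ℕ) :
    MvPolynomial (Fin r ⊕ Fin t) k :=
  ∏ j, (X (Sum.inr j)) ^ β j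


lemma Xmon_add (k : Type*) [Field k] (r t : ℕ) (α γ : Fin r → ℕ) :
    Xmon k r t (α + γ) = Xmon k r t α * Xmon k r t γ := by
  simp [Xmon, pow_add, Finset.prod_mul_distrib]

lemma Ymon_add (k : Type*) [Field k] (r t : ℕ) (β δ : Fin t → ℕ) :
    Ymon k r t (β + δ) = Ymon k r t β * Ymon k r t δ := by
  simp [Ymon, pow_add, Finset.prod_mul_distrib]

lemma Xmon_smul (k : Type*) [Field k] (r t : ℕ) (m : ℕ) (γ : Fin r → ℕ) :
    Xmon k r t (m • γ) = (Xmon k r t γ) ^ m := by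
  simp only [Xmon, ← Finset.prod_pow]
  refine Finset.prod_congr rfl fun i _ => ?_
  rw [Pi.smul_apply, smul_eq_mul, mul_comm, pow_mul]

lemma Ymon_smul (k : Type*) [Field k] (r t : ℕ) (m : ℕ) (δ : Fin t → ℕ) :
    Ymon k r t (m • δ) = (Ymon k r t δ) ^ m := by
  simp only [Ymon, ← Finset.prod_pow]
  refine Finset.prod_congr rfl fun j _ => ?_
  rw [Pi.smul_apply, smul_eq_mul, mul_comm, pow_mul]

lemma Xmon_zero (k : Type*) [Field k] (r t : ℕ) : Xmon k r t 0 = 1 := by simp [Xmon]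

lemma Ymon_zero (k : Type*) [Field k] (r t : ℕ) : Ymon k r t 0 = 1 := by simp [Ymon]

/-- Sufficiency of the gluing criterion: if the cancellative monoid `S` (embedded in the
group `G`) generated by `a₁,…,a_r,b₁,…,b_t` satisfies `G(S₁) ⊓ G(S₂) = dℤ` with
`d = ∑ γ_Xᵢ aᵢ = ∑ γ_Yⱼ bⱼ`, `γ_X, γ_Y` nonzero, then
`I_S = I_{S₁} + I_{S₂} + (X^{γ_X} - Y^{γ_Y})`. -/
theorem stmt3 (k : Type*) [Field k] {G : Type*} [AddCommGroup G] {r t : ℕ}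
    (a : Fin r → G) (b : Fin t → G)
    (γX : Fin r → ℕ) (γY : Fin t → ℕ) (hγX : γX ≠ 0) (hγY : γY ≠ 0)
    (d : G) (hd1 : ∑ i, γX i • a i = d) (hd2 : ∑ j, γY j • b j = d)
    (hG : AddSubgroup.closure (Set.range a) ⊓ AddSubgroup.closure (Set.range b)
      = AddSubgroup.zmultiples d)
    (IS I1 I2 : Ideal (MvPolynomial (Fin r ⊕ Fin t) k))
    (hIS : IS = Ideal.span {f | ∃ α γ : Fin r → ℕ, ∃ β δ : Fin t → ℕ,
      f = Xmon k r t α * Ymon k r t β - Xmon k r t γ * Ymon k r t δ ∧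
      ∑ i, α i • a i + ∑ j, β j • b j = ∑ i, γ i • a i + ∑ j, δ j • b j})
    (hI1 : I1 = Ideal.span {f | ∃ α γ : Fin r → ℕ,
      f = Xmon k r t α - Xmon k r t γ ∧ ∑ i, α i • a i = ∑ i, γ i • a i})
    (hI2 : I2 = Ideal.span {f | ∃ β δ : Fin t → ℕ,
      f = Ymon k r t β - Ymon k r t δ ∧ ∑ j, β j • b j = ∑ j, δ j • b j}) :
    IS = I1 ⊔ I2 ⊔ Ideal.span {Xmon k r t γX - Ymon k r t γY} := by

  have key : ∀ (α γ : Fin r → ℕ) (β δ : Fin t → ℕ) (m : ℕ),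
      (∑ i, α i • a i = ∑ i, γ i • a i + m • d) →
      (∑ j, δ j • b j = ∑ j, β j • b j + m • d) →
      Xmon k r t α * Ymon k r t β - Xmon k r t γ * Ymon k r t δ ∈
        I1 ⊔ I2 ⊔ Ideal.span {Xmon k r t γX - Ymon k r t γY} := by
    intro α γ β δ m h1 h2
    have e1 : ∑ i, (γ + m • γX) i • a i = ∑ i, γ i • a i + m • d := by
      simp only [Pi.add_apply, Pi.smul_apply, smul_eq_mul, add_smul, mul_smul,
        Finset.sum_add_distrib, ← Finset.smul_sum, hd1]
    have e2 : ∑ j, (β + m • γY) j • b j = ∑ j, β j • b j + m • d := by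
      simp only [Pi.add_apply, Pi.smul_apply, smul_eq_mul, add_smul, mul_smul,
        Finset.sum_add_distrib, ← Finset.smul_sum, hd2]
    have hf1 : Xmon k r t α - Xmon k r t (γ + m • γX) ∈ I1 := by
      rw [hI1]
      exact Ideal.subset_span ⟨α, γ + m • γX, rfl, h1.trans e1.symm⟩
    have hf3 : Ymon k r t (β + m • γY) - Ymon k r t δ ∈ I2 := by
      rw [hI2]
      exact Ideal.subset_span ⟨β + m • γY, δ, rfl, e2.trans h2.symm⟩
    have hf2 : Xmon k r t (m • γX) - Ymon k r t (m • γY) ∈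
        Ideal.span {Xmon k r t γX - Ymon k r t γY} := by
      rw [Xmon_smul, Ymon_smul, Ideal.mem_span_singleton]
      exact sub_dvd_pow_sub_pow _ _ m
    have decomp : Xmon k r t α * Ymon k r t β - Xmon k r t γ * Ymon k r t δ
        = (Xmon k r t α - Xmon k r t (γ + m • γX)) * Ymon k r t β
          + (Xmon k r t γ * Ymon k r t β) * (Xmon k r t (m • γX) - Ymon k r t (m • γY))
          + Xmon k r t γ * (Ymon k r t (β + m • γY) - Ymon k r t δ) := by
      rw [Xmon_add, Ymon_add]; ring
    rw [decomp]
    exact add_mem (add_mem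
      (Ideal.mem_sup_left (Ideal.mem_sup_left (Ideal.mul_mem_right _ _ hf1)))
      (Ideal.mem_sup_right (Ideal.mul_mem_left _ _ hf2)))
      (Ideal.mem_sup_left (Ideal.mem_sup_right (Ideal.mul_mem_left _ _ hf3)))
  apply le_antisymm
  · rw [hIS, Ideal.span_le]
    rintro f ⟨α, γ, β, δ, rfl, hdeg⟩
    have hx : ∑ i, α i • a i - ∑ i, γ i • a i = ∑ j, δ j • b j - ∑ j, β j • b j := by
      rw [sub_eq_sub_iff_add_eq_add, hdeg, add_comm]
    have hmem : ∑ i, α i • a i - ∑ i, γ i • a i ∈ AddSubgroup.zmultiples d := by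
      rw [← hG, AddSubgroup.mem_inf]
      refine ⟨?_, ?_⟩
      · exact sub_mem
          (sum_mem fun i _ => nsmul_mem
            (AddSubgroup.subset_closure (Set.mem_range_self i)) _)
          (sum_mem fun i _ => nsmul_mem
            (AddSubgroup.subset_closure (Set.mem_range_self i)) _)
      · rw [hx]
        exact sub_mem
          (sum_mem fun j _ => nsmul_mem
            (AddSubgroup.subset_closure (Set.mem_range_self j)) _)
          (sum_mem fun j _ => nsmul_mem
            (AddSubgroup.subset_closure (Set.mem_range_self j)) _)
    obtain ⟨n, hn⟩ := AddSubgroup.mem_zmultiples_iff.mp hmem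
    rcases le_or_gt 0 n with hn0 | hn0
    · have hm : (n.toNat : ℕ) • d = ∑ i, α i • a i - ∑ i, γ i • a i := by
        rw [← natCast_zsmul, Int.toNat_of_nonneg hn0, hn]
      refine key α γ β δ n.toNat ?_ ?_
      · rw [hm]; abel
      · rw [hm, hx]; abel
    · have hm : ((-n).toNat : ℕ) • d = ∑ i, γ i • a i - ∑ i, α i • a i := by
        rw [← natCast_zsmul, Int.toNat_of_nonneg (by omega), neg_zsmul, hn]
        abel
      have hx' : ∑ i, γ i • a i - ∑ i, α i • a i = ∑ j, β j • b j - ∑ j, δ j • b j := by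
        rw [← neg_sub, hx, neg_sub]
      have := key γ α δ β (-n).toNat (by rw [hm]; abel) (by rw [hm, hx']; abel)
      have hneg := neg_mem this
      simpa using hneg
  · refine sup_le (sup_le ?_ ?_) ?_
    · rw [hI1, hIS, Ideal.span_le]
      rintro f ⟨α, γ, rfl, h⟩
      refine Ideal.subset_span ⟨α, γ, 0, 0, ?_, ?_⟩
      · rw [Ymon_zero, mul_one, mul_one]
      · simpa using h
    · rw [hI2, hIS, Ideal.span_le]
      rintro f ⟨β, δ, rfl, h⟩
      refine Ideal.subset_span ⟨0, 0, β, δ, ?_, ?_⟩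
      · rw [Xmon_zero, one_mul, one_mul]
      · simpa using h
    · rw [hIS, Ideal.span_le]
      rintro f hf
      rw [Set.mem_singleton_iff] at hf
      subst hf
      refine Ideal.subset_span ⟨γX, 0, 0, γY, ?_, ?_⟩
      · rw [Xmon_zero, Ymon_zero, mul_one, one_mul]
      · simp [hd1, hd2]
end

section
/- Let S be a glued semigroup, i.e., ker S ⊆ ℤ^{r+t} is generated by L₁ ∪ L₂ ∪ {(γ_X, -γ_Y)} where elements of L₁ are supported in the first r coordinates, elements of L₂ in the last t coordinates, and (γ_X, γ_Y) ∈ ℕ^{r+t}. If (α,β), (γ,δ) ∈ ℕ^r × ℕ^t satisfy (α,β) - (γ,δ) ∈ ker S, then there exists λ ∈ ℤ and a monomial witness connecting them: either (case λ=0) (α, δ) also has the same degree, i.e., (α-γ, 0) ∈ ker S and (0, β-δ) ∈ ker S; or (case λ>0) (α,β) and (λγ_X + γ, β) have the same degree, i.e., (α - λγ_X - γ, 0) ∈ L₁ℤ; or the symmetric statement for λ<0. -/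
/-- Lattice content of Lemma `MixComp`: if `ker S = K` is generated by
`L₁ ∪ L₂ ∪ {(γ_X, -γ_Y)}` with `L₁` supported in the first `r` coordinates,
`L₂` in the last `t`, and `(γ_X, γ_Y) ∈ ℕ^{r+t}`, then for nonnegative `(α,β)`, `(γ,δ)`
with `(α,β) - (γ,δ) ∈ K` there is `λ ∈ ℤ` such that either `λ = 0` and
`(α-γ,0), (0,β-δ) ∈ K`, or `λ > 0` and `(α - λγ_X - γ, 0) ∈ L₁`, or `λ < 0` and
`(0, β + λγ_Y - δ) ∈ L₂`. -/
theorem stmt5 {r t : ℕ}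
    (L₁ L₂ K : AddSubgroup ((Fin r → ℤ) × (Fin t → ℤ)))
    (hL₁ : ∀ x ∈ L₁, x.2 = 0) (hL₂ : ∀ x ∈ L₂, x.1 = 0)
    (γX : Fin r → ℤ) (γY : Fin t → ℤ) (hγX : 0 ≤ γX) (hγY : 0 ≤ γY)
    (hK : K = L₁ ⊔ L₂ ⊔ AddSubgroup.zmultiples (γX, -γY))
    (α γ : Fin r → ℤ) (β δ : Fin t → ℤ)
    (hα : 0 ≤ α) (hβ : 0 ≤ β) (hγ : 0 ≤ γ) (hδ : 0 ≤ δ)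
    (hmem : (α - γ, β - δ) ∈ K) :
    ∃ lam : ℤ,
      (lam = 0 ∧ (α - γ, (0 : Fin t → ℤ)) ∈ K ∧ ((0 : Fin r → ℤ), β - δ) ∈ K) ∨
      (0 < lam ∧ (α - lam • γX - γ, (0 : Fin t → ℤ)) ∈ L₁) ∨
      (lam < 0 ∧ ((0 : Fin r → ℤ), β + lam • γY - δ) ∈ L₂) := by
  rw [hK] at hmem
  rw [AddSubgroup.mem_sup] at hmem
  obtain ⟨y, hy, z, hz, hyz⟩ := hmem
  rw [AddSubgroup.mem_sup] at hy
  obtain ⟨a, ha, b, hb, hab⟩ := hy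
  obtain ⟨k, hk⟩ := AddSubgroup.mem_zmultiples_iff.mp hz
  have ha2 := hL₁ a ha
  have hb1 := hL₂ b hb
  have heq : (a.1 + k • γX, b.2 - k • γY) = (α - γ, β - δ) := by
    rw [← hyz, ← hab, ← hk]
    apply Prod.ext
    · simp [Prod.fst_add, hb1]
    · simp [Prod.snd_add, ha2, sub_eq_add_neg]
  have h1 : a.1 + k • γX = α - γ := congrArg Prod.fst heq
  have h2 : b.2 - k • γY = β - δ := congrArg Prod.snd heq
  refine ⟨k, ?_⟩
  rcases lt_trichotomy k 0 with hk0 | hk0 | hk0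
  · right; right
    refine ⟨hk0, ?_⟩
    have : ((0 : Fin r → ℤ), β + k • γY - δ) = b := by
      apply Prod.ext
      · simp [hb1]
      · rw [sub_eq_iff_eq_add] at h2
        rw [h2]; abel
    rw [this]; exact hb
  · left
    refine ⟨hk0, ?_, ?_⟩
    · have : (α - γ, (0 : Fin t → ℤ)) = a := by
        apply Prod.ext
        · simp only
          rw [← h1, hk0]; simp
        · simp [ha2]
      rw [this, hK]
      exact AddSubgroup.mem_sup_left (AddSubgroup.mem_sup_left ha)
    · have : ((0 : Fin r → ℤ), β - δ) = b := by
        apply Prod.ext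
        · simp [hb1]
        · simp only
          rw [← h2, hk0]; simp
      rw [this, hK]
      exact AddSubgroup.mem_sup_left (AddSubgroup.mem_sup_right hb)
  · right; left
    refine ⟨hk0, ?_⟩
    have : (α - k • γX - γ, (0 : Fin t → ℤ)) = a := by
      apply Prod.ext
      · rw [eq_sub_of_add_eq h1]; abel
      · simp [ha2]
    rw [this]; exact ha
end

section
/- Let D ∈ ℤ^{k×n} be a matrix in Smith normal form with all invariant factors equal to 1 and with zero-columns exactly the last s columns (s ≥ 1), i.e., D = (I_k | 0) up to this shape with k = n - s. Let w ∈ ℤ^n. Then the (k+1) × n matrix obtained by appending the row w to D has all invariant factors equal to 1 if and only if gcd(w_{k+1}, ..., w_n) = 1. -/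
/-
An integer `m × n` matrix with `m ≤ n` has Smith normal form `(I_m | 0)` exactly when it maps
`ℤⁿ` onto `ℤᵐ`: a surjection onto a free module splits, `ℤⁿ ≅ ℤᵐ × ker`, and a basis adapted to
this splitting gives the column operations. The first `k` coordinates of `(D; w) x` are those
of `x`, so this matrix is onto iff some `x` supported on the last `n - k` coordinates has
`w ⬝ᵥ x = 1`, which by Bézout means `gcd (w_{k+1}, …, w_n) = 1`.
-/

/-- All `k+1` invariant factors of the matrix `M` equal `1`: there are unimodular
`P`, `Q` with `P M Q = (I_{k+1} | 0)`. -/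
def allDiagonalOnes {m n : ℕ} (M : Matrix (Fin m) (Fin n) ℤ) : Prop :=
  ∃ (P : Matrix (Fin m) (Fin m) ℤ) (Q : Matrix (Fin n) (Fin n) ℤ),
    IsUnit P.det ∧ IsUnit Q.det ∧
      P * M * Q = Matrix.of fun (i : Fin m) (j : Fin n) =>
        if (i : ℕ) = (j : ℕ) then (1 : ℤ) else 0

open Matrix

theorem Finset.exists_dotProduct_eq_one_iff_gcd_eq_one {R ι : Type*} [CommRing R] [IsBezout R]
    [NormalizedGCDMonoid R] [Fintype ι] (s : Finset ι) (w : ι → R) :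
    (∃ x : ι → R, (∀ j ∉ s, x j = 0) ∧ w ⬝ᵥ x = 1) ↔ s.gcd w = 1 := by
  classical
  constructor
  · rintro ⟨x, hx, hwx⟩
    have hsum : ∑ j ∈ s, w j * x j = 1 := by
      rw [← hwx, dotProduct]
      exact Finset.sum_subset (Finset.subset_univ s) fun j _ hj => by simp [hx j hj]
    have hdvd : s.gcd w ∣ 1 := hsum ▸ Finset.dvd_sum fun j hj => (Finset.gcd_dvd hj).mul_right _
    rw [← Finset.normalize_gcd, normalize_eq_one]
    exact isUnit_of_dvd_one hdvd
  · intro hgcd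
    obtain ⟨c, hc⟩ := s.gcd_eq_sum_mul w
    refine ⟨fun j => if j ∈ s then c j else 0, fun j hj => if_neg hj, ?_⟩
    simp only [dotProduct, mul_ite, mul_zero, Finset.sum_ite_mem, Finset.univ_inter, ← hc, hgcd]

section RectIdentity

variable (R : Type*) [CommRing R] (m n : ℕ)

def rectIdentity : Matrix (Fin m) (Fin n) R :=
  Matrix.of fun i j => if (i : ℕ) = (j : ℕ) then 1 else 0

variable {R m n}

theorem surjective_mulVec_rectIdentity (h : m ≤ n) :
    Function.Surjective (rectIdentity R m n).mulVec := by
  intro t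
  refine ⟨fun j => if hj : (j : ℕ) < m then t ⟨j, hj⟩ else 0, funext fun i => ?_⟩
  rw [mulVec, dotProduct, Finset.sum_eq_single ⟨i, by omega⟩]
  · simp [rectIdentity]
  · intro j _ hj
    have : (i : ℕ) ≠ j := fun hij => hj (Fin.ext hij.symm)
    simp [rectIdentity, this]
  · simp

end RectIdentity

theorem LinearMap.exists_basis_apply_eq_rectIdentity_of_surjective {R : Type*} [CommRing R]
    [IsDomain R] [IsPrincipalIdealRing R] {m n : ℕ} (f : (Fin n → R) →ₗ[R] (Fin m → R))
    (hf : Function.Surjective f) :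
    ∃ b : Module.Basis (Fin n) R (Fin n → R), ∀ j, f (b j) = (rectIdentity R m n).col j := by
  obtain ⟨l, hl⟩ := f.exists_rightInverse_of_surjective (LinearMap.range_eq_top.2 hf)
  obtain ⟨e, -, hfe⟩ := (f.exact_subtype_ker_map.splitSurjectiveEquiv
    (Submodule.injective_subtype _)) ⟨l, hl⟩
  -- `e : (Fin n → R) ≃ₗ ker f × (Fin m → R)` with `f = snd ∘ e`; the swap below puts the
  -- preimages of the standard basis of `Fin m → R` at the first `m` indices.
  obtain ⟨r, kb⟩ := (LinearMap.ker f).basisOfPid (Pi.basisFun R (Fin n))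
  let b := ((Pi.basisFun R (Fin m)).prod kb).map (e.trans (LinearEquiv.prodComm R _ _)).symm
  have hfb : ∀ u, f (b u) = Sum.elim (Pi.basisFun R (Fin m)) 0 u := by
    intro u
    rw [hfe]
    rcases u with p | q <;> simp [b]
  have hcard : m + r = n := by simpa using (Module.finrank_eq_card_basis b).symm
  refine ⟨b.reindex (finSumFinEquiv.trans (finCongr hcard)), fun j => ?_⟩
  obtain ⟨u, rfl⟩ := (finSumFinEquiv.trans (finCongr hcard)).surjective j
  rw [Module.Basis.reindex_apply, Equiv.symm_apply_apply, hfb]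
  ext i
  rcases u with p | q
  · simp [rectIdentity, Pi.single_apply, Fin.ext_iff]
  · have : (i : ℕ) ≠ m + q := by omega
    simp [rectIdentity, this]

section AllDiagonalOnes

variable {m n : ℕ} {M : Matrix (Fin m) (Fin n) ℤ}

theorem allDiagonalOnes_of_basis (b : Module.Basis (Fin n) ℤ (Fin n → ℤ))
    (hb : ∀ j, M *ᵥ b j = (rectIdentity ℤ m n).col j) : allDiagonalOnes M := by
  let Q : Matrix (Fin n) (Fin n) ℤ := (Pi.basisFun ℤ (Fin n)).toMatrix b
  have : Invertible Q := (Pi.basisFun ℤ (Fin n)).invertibleToMatrix b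
  refine ⟨1, Q, by simp, isUnit_det_of_invertible Q, ?_⟩
  ext i j
  have hbji := congrFun (hb j) i
  simp only [mulVec, dotProduct] at hbji
  simp [Matrix.mul_apply, Q, Module.Basis.toMatrix_apply, hbji, rectIdentity]

theorem allDiagonalOnes.surjective_mulVec (hmn : m ≤ n) (h : allDiagonalOnes M) :
    Function.Surjective M.mulVec := by
  obtain ⟨P, Q, hP, -, hPMQ⟩ := h
  intro t
  obtain ⟨y, hy⟩ := surjective_mulVec_rectIdentity (R := ℤ) hmn (P *ᵥ t)
  refine ⟨Q *ᵥ y, ?_⟩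
  calc M *ᵥ (Q *ᵥ y) = P⁻¹ *ᵥ ((P * M * Q) *ᵥ y) := by
        rw [mulVec_mulVec, mulVec_mulVec, Matrix.mul_assoc P, ← Matrix.mul_assoc P⁻¹,
          nonsing_inv_mul P hP, Matrix.one_mul]
    _ = P⁻¹ *ᵥ (P *ᵥ t) := by rw [hPMQ, ← hy]; rfl
    _ = t := by rw [mulVec_mulVec, nonsing_inv_mul P hP, one_mulVec]

theorem allDiagonalOnes_iff_surjective_mulVec (hmn : m ≤ n) :
    allDiagonalOnes M ↔ Function.Surjective M.mulVec := by
  refine ⟨allDiagonalOnes.surjective_mulVec hmn, fun hM => ?_⟩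
  obtain ⟨b, hb⟩ := M.mulVecLin.exists_basis_apply_eq_rectIdentity_of_surjective hM
  exact allDiagonalOnes_of_basis b hb

end AllDiagonalOnes

def identityWithRow {R : Type*} [CommRing R] (k n : ℕ) (w : Fin n → R) :
    Matrix (Fin (k + 1)) (Fin n) R :=
  Matrix.of fun i j => if (i : ℕ) < k then (if (j : ℕ) = (i : ℕ) then 1 else 0) else w j

section IdentityWithRow

variable {R : Type*} [CommRing R] {k n : ℕ} (w : Fin n → R)

theorem identityWithRow_mulVec_of_lt (x : Fin n → R) {i : Fin (k + 1)} (hi : (i : ℕ) < k)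
    (j : Fin n) (hj : (j : ℕ) = i) : (identityWithRow k n w *ᵥ x) i = x j := by
  rw [mulVec, dotProduct, Finset.sum_eq_single j]
  · simp [identityWithRow, hi, hj]
  · intro j' _ hj'
    have : (j' : ℕ) ≠ i := fun h => hj' (Fin.ext (h.trans hj.symm))
    simp [identityWithRow, hi, this]
  · simp

theorem identityWithRow_mulVec_last (x : Fin n → R) :
    (identityWithRow k n w *ᵥ x) (Fin.last k) = w ⬝ᵥ x := by
  simp [mulVec, identityWithRow, dotProduct]

theorem surjective_identityWithRow_mulVec_iff (hk : k < n) :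
    Function.Surjective (identityWithRow k n w).mulVec ↔
      ∃ x : Fin n → R, (∀ j : Fin n, (j : ℕ) < k → x j = 0) ∧ w ⬝ᵥ x = 1 := by
  constructor
  · intro hsurj
    obtain ⟨x, hx⟩ := hsurj (Pi.single (Fin.last k) 1)
    refine ⟨x, fun j hj => ?_, ?_⟩
    · have hlast : (⟨j, by omega⟩ : Fin (k + 1)) ≠ Fin.last k :=
        Fin.ne_of_val_ne (by rw [Fin.val_last]; exact hj.ne)
      rw [← identityWithRow_mulVec_of_lt w x (i := ⟨j, by omega⟩) hj j rfl, hx]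
      exact Pi.single_eq_of_ne hlast 1
    · rw [← identityWithRow_mulVec_last, hx, Pi.single_eq_same]
  · rintro ⟨c, hc, hwc⟩ t
    let u : Fin n → R := fun j => if hj : (j : ℕ) < k then t ⟨j, by omega⟩ else 0
    refine ⟨u + (t (Fin.last k) - w ⬝ᵥ u) • c, funext fun i => ?_⟩
    by_cases hi : (i : ℕ) < k
    · rw [identityWithRow_mulVec_of_lt w _ hi ⟨i, by omega⟩ rfl]
      simp [u, hi, hc ⟨i, by omega⟩ hi]
    · obtain rfl : i = Fin.last k := Fin.ext (by rw [Fin.val_last]; omega)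
      rw [identityWithRow_mulVec_last, dotProduct_add, dotProduct_smul, hwc]
      simp

end IdentityWithRow

/-- Lemma `mcd_afin`: let `D = (I_k | 0)` with `s = n - k ≥ 1` zero-columns and let
`w ∈ ℤ^n`. The matrix obtained by appending the row `w` to `D` has all invariant factors
equal to `1` iff `gcd(w_{k+1}, …, w_n) = 1`. -/
theorem stmt13 {n k : ℕ} (hk : k < n) (w : Fin n → ℤ)
    (M : Matrix (Fin (k + 1)) (Fin n) ℤ)
    (hM : M = Matrix.of fun (i : Fin (k + 1)) (j : Fin n) =>
      if (i : ℕ) < k then (if (j : ℕ) = (i : ℕ) then (1 : ℤ) else 0) else w j) :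
    allDiagonalOnes M ↔
      (Finset.univ.filter fun j : Fin n => k ≤ (j : ℕ)).gcd w = 1 := by
  rw [show M = identityWithRow k n w from hM, allDiagonalOnes_iff_surjective_mulVec hk,
    surjective_identityWithRow_mulVec_iff w hk, ← Finset.exists_dotProduct_eq_one_iff_gcd_eq_one]
  simp only [Finset.mem_filter, Finset.mem_univ, true_and, not_le]
end

section
/- Let S = ⟨(13,0), (5,8), (2,11), (0,13), (4,4), (6,6), (7,7), (9,9)⟩ ⊆ ℕ². Let S₁ = ⟨(13,0),(5,8),(2,11),(0,13)⟩ and S₂ = ⟨(4,4),(6,6),(7,7),(9,9)⟩. Then G(S₁) ∩ G(S₂) = ℤ·(13,13), and (13,13) ∈ S₁ ∩ S₂; hence S is the gluing of S₁ and S₂ with glued degree (13,13). -/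
private def phi : ℤ × ℤ →+ ZMod 13 :=
  AddMonoidHom.mk' (fun p => ((p.1 + p.2 : ℤ) : ZMod 13)) (by
    intro a b; simp [Prod.fst_add, Prod.snd_add]; ring)

/-- For `S₁ = ⟨(13,0),(5,8),(2,11),(0,13)⟩` and `S₂ = ⟨(4,4),(6,6),(7,7),(9,9)⟩` in `ℤ²`:
`G(S₁) ∩ G(S₂) = ℤ·(13,13)` and `(13,13) ∈ S₁ ∩ S₂`; hence `S = ⟨S₁ ∪ S₂⟩` is the
gluing of `S₁` and `S₂` with glued degree `(13,13)`. -/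
theorem stmt15 :
    (AddSubgroup.closure ({(13, 0), (5, 8), (2, 11), (0, 13)} : Set (ℤ × ℤ)) ⊓
      AddSubgroup.closure ({(4, 4), (6, 6), (7, 7), (9, 9)} : Set (ℤ × ℤ)) =
      AddSubgroup.zmultiples ((13, 13) : ℤ × ℤ)) ∧
    ((13, 13) : ℤ × ℤ) ∈
      AddSubmonoid.closure ({(13, 0), (5, 8), (2, 11), (0, 13)} : Set (ℤ × ℤ)) ∧
    ((13, 13) : ℤ × ℤ) ∈
      AddSubmonoid.closure ({(4, 4), (6, 6), (7, 7), (9, 9)} : Set (ℤ × ℤ)) := by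
  refine ⟨?_, ?_, ?_⟩
  · apply le_antisymm
    · rintro x ⟨h1, h2⟩
      -- x is a multiple of (1,1)
      have hsub : AddSubgroup.closure ({(4, 4), (6, 6), (7, 7), (9, 9)} : Set (ℤ × ℤ)) ≤
          AddSubgroup.zmultiples ((1, 1) : ℤ × ℤ) := by
        rw [AddSubgroup.closure_le]
        rintro p (rfl | rfl | rfl | rfl)
        · exact ⟨4, rfl⟩
        · exact ⟨6, rfl⟩
        · exact ⟨7, rfl⟩
        · exact ⟨9, rfl⟩
      obtain ⟨n, rfl⟩ := hsub h2
      -- phi vanishes on closure of S₁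
      have hker : AddSubgroup.closure ({(13, 0), (5, 8), (2, 11), (0, 13)} : Set (ℤ × ℤ)) ≤
          phi.ker := by
        rw [AddSubgroup.closure_le]
        rintro p (rfl | rfl | rfl | rfl) <;> simp [AddMonoidHom.mem_ker, phi] <;> decide
      have h0 : phi (n • ((1, 1) : ℤ × ℤ)) = 0 := hker h1
      have h2n : ((2 * n : ℤ) : ZMod 13) = 0 := by
        have : phi (n • ((1, 1) : ℤ × ℤ)) = ((2 * n : ℤ) : ZMod 13) := by
          simp [phi, Prod.smul_def]; ring
        rwa [this] at h0
      have hdvd : (13 : ℤ) ∣ 2 * n := by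
        rwa [ZMod.intCast_zmod_eq_zero_iff_dvd] at h2n
      have hdvd' : (13 : ℤ) ∣ n := by
        have := (Int.Prime.dvd_mul' (by norm_num) hdvd)
        rcases this with h | h
        · omega
        · exact h
      obtain ⟨k, rfl⟩ := hdvd'
      exact ⟨k, by simp [Prod.smul_def]; omega⟩
    · rw [AddSubgroup.zmultiples_le]
      refine ⟨?_, ?_⟩
      · have a : ((13, 0) : ℤ × ℤ) ∈ AddSubgroup.closure
            ({(13, 0), (5, 8), (2, 11), (0, 13)} : Set (ℤ × ℤ)) :=
          AddSubgroup.subset_closure (by simp)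
        have b : ((0, 13) : ℤ × ℤ) ∈ AddSubgroup.closure
            ({(13, 0), (5, 8), (2, 11), (0, 13)} : Set (ℤ × ℤ)) :=
          AddSubgroup.subset_closure (by simp)
        simpa using AddSubgroup.add_mem _ a b
      · have a : ((6, 6) : ℤ × ℤ) ∈ AddSubgroup.closure
            ({(4, 4), (6, 6), (7, 7), (9, 9)} : Set (ℤ × ℤ)) :=
          AddSubgroup.subset_closure (by simp)
        have b : ((7, 7) : ℤ × ℤ) ∈ AddSubgroup.closure
            ({(4, 4), (6, 6), (7, 7), (9, 9)} : Set (ℤ × ℤ)) :=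
          AddSubgroup.subset_closure (by simp)
        simpa using AddSubgroup.add_mem _ a b
  · have a : ((13, 0) : ℤ × ℤ) ∈ AddSubmonoid.closure
        ({(13, 0), (5, 8), (2, 11), (0, 13)} : Set (ℤ × ℤ)) :=
      AddSubmonoid.subset_closure (by simp)
    have b : ((0, 13) : ℤ × ℤ) ∈ AddSubmonoid.closure
        ({(13, 0), (5, 8), (2, 11), (0, 13)} : Set (ℤ × ℤ)) :=
      AddSubmonoid.subset_closure (by simp)
    simpa using AddSubmonoid.add_mem _ a b
  · have a : ((6, 6) : ℤ × ℤ) ∈ AddSubmonoid.closure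
        ({(4, 4), (6, 6), (7, 7), (9, 9)} : Set (ℤ × ℤ)) :=
      AddSubmonoid.subset_closure (by simp)
    have b : ((7, 7) : ℤ × ℤ) ∈ AddSubmonoid.closure
        ({(4, 4), (6, 6), (7, 7), (9, 9)} : Set (ℤ × ℤ)) :=
      AddSubmonoid.subset_closure (by simp)
    simpa using AddSubmonoid.add_mem _ a b
end
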